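/- arXiv:1708.06253 — 4 statements merged into one kernel-verified Lean document; each statement's English description precedes it below -/
import Mathlib

section
/- Let (X,σ) be a subshift, let R ∈ ℕ ∪ {0}, and let φ,ψ ∈ Aut_R(X). Suppose w ∈ L(X) extends uniquely 2R times to the right and left, and let w̃ ∈ L(X) be the unique word of length |w| + 4R obtained by this extension. If φ(w̃) = ψ(w̃) (as words, applying the range-R block codes), then φ^{-1}∘ψ preserves occurrences of w̃. -/
open Filter Topology Pointwise

section Defs

variable {A : Type*}

/-- The left shift on bi-infinite sequences over `A`. -/
def shift (x : ℤ → A) : ℤ → A := fun i => x (i + 1)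

/-- The word `w` occurs in `x` at position `j`. -/
def OccursAt {n : ℕ} (x : ℤ → A) (w : Fin n → A) (j : ℤ) : Prop :=
  ∀ i : Fin n, x (j + (i : ℤ)) = w i

/-- The word `w` belongs to the language of `X`. -/
def InLanguage (X : Set (ℤ → A)) {n : ℕ} (w : Fin n → A) : Prop :=
  ∃ x ∈ X, OccursAt x w 0

/-- The complexity function of `X`: the number of words of length `n` in the language. -/
noncomputable def complexity (X : Set (ℤ → A)) (n : ℕ) : ℕ :=
  {w : Fin n → A | InLanguage X w}.ncard

/-- `x` is aperiodic: no positive shift fixes it. -/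
def IsAperiodic (x : ℤ → A) : Prop := ∀ p : ℤ, 0 < p → (fun i => x (i + p)) ≠ x

/-- The subshift obtained from `X` by forbidding the word `w`. -/
def Forbid (X : Set (ℤ → A)) {n : ℕ} (w : Fin n → A) : Set (ℤ → A) :=
  {x ∈ X | ∀ j : ℤ, ¬ OccursAt x w j}

/-- `w` extends uniquely `L` times to the right and left in the language of `X`. -/
def ExtendsUniquely (X : Set (ℤ → A)) {n : ℕ} (w : Fin n → A) (L : ℕ) : Prop :=
  ∃! u : Fin (n + 2 * L) → A,
    InLanguage X u ∧ ∀ i : Fin n, u ⟨L + (i : ℕ), by have := i.isLt; omega⟩ = w i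

variable [TopologicalSpace A]

/-- The automorphism group of a subshift `X`: permutations of `X` which are homeomorphisms
and commute with the shift. -/
def Aut (X : Set (ℤ → A)) : Subgroup (Equiv.Perm ↥X) where
  carrier := {φ | Continuous ⇑φ ∧ Continuous ⇑φ.symm ∧
    (∀ x y : ↥X, shift (x : ℤ → A) = (y : ℤ → A) →
      shift ((φ x : ℤ → A)) = ((φ y : ℤ → A))) ∧
    (∀ x y : ↥X, shift (x : ℤ → A) = (y : ℤ → A) →
      shift ((φ.symm x : ℤ → A)) = ((φ.symm y : ℤ → A)))}
  one_mem' := ⟨continuous_id, continuous_id, fun _ _ h => h, fun _ _ h => h⟩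
  mul_mem' := by
    rintro a b ⟨hac, hac', haσ, haσ'⟩ ⟨hbc, hbc', hbσ, hbσ'⟩
    refine ⟨?_, ?_, ?_, ?_⟩
    · simpa using hac.comp hbc
    · simpa [Equiv.Perm.mul_def] using hbc'.comp hac'
    · intro x y h
      simpa using haσ _ _ (hbσ x y h)
    · intro x y h
      simpa [Equiv.Perm.mul_def] using hbσ' _ _ (haσ' x y h)
  inv_mem' := by
    rintro a ⟨hac, hac', haσ, haσ'⟩
    exact ⟨hac', by simpa [Equiv.Perm.inv_def] using hac, fun x y h => haσ' x y h,
      fun x y h => by simpa [Equiv.Perm.inv_def] using haσ x y h⟩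

/-- `f` is a block code of range `R` representing `φ`. -/
def IsBlockCode (X : Set (ℤ → A)) (R : ℕ) (φ : Equiv.Perm ↥X)
    (f : (Fin (2 * R + 1) → A) → A) : Prop :=
  ∀ (x : ↥X) (i : ℤ), (φ x : ℤ → A) i = f (fun j => (x : ℤ → A) (i + (j : ℤ) - R))

/-- `Aut_R(X)`: automorphisms such that both they and their inverses are given by
sliding block codes of range `R`. -/
def AutR (X : Set (ℤ → A)) (R : ℕ) : Set (Equiv.Perm ↥X) :=
  {φ | φ ∈ Aut X ∧ (∃ f, IsBlockCode X R φ f) ∧ (∃ g, IsBlockCode X R φ⁻¹ g)}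

end Defs

/-- Apply a block code of range `R` to a word, shortening it by `2R`. -/
def applyCode {A : Type*} {R n : ℕ} (f : (Fin (2 * R + 1) → A) → A) (w : Fin n → A) :
    Fin (n - 2 * R) → A :=
  fun i => f (fun j => w ⟨(i : ℕ) + (j : ℕ), by have := i.isLt; have := j.isLt; omega⟩)

section Defs2

variable {A : Type*} [TopologicalSpace A]

/-- `φ` preserves occurrences of `v`. -/
def PreservesOcc (X : Set (ℤ → A)) (φ : Equiv.Perm ↥X) {n : ℕ} (v : Fin n → A) : Prop :=
  ∀ x : ↥X, OccursAt (x : ℤ → A) v 0 → OccursAt ((φ x : ℤ → A)) v 0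

/-- `φ` preserves occurrences of `v` which are at least `D` units away from any occurrence of
the words `u 0, …, u (i-1)`. -/
def PreservesOccAway (X : Set (ℤ → A)) (φ : Equiv.Perm ↥X) {n : ℕ} (v : Fin n → A)
    (D : ℕ) (ml : ℕ → ℕ) (u : ∀ t, Fin (ml t) → A) (i : ℕ) : Prop :=
  ∀ x : ↥X, OccursAt (x : ℤ → A) v 0 →
    (∀ t < i, ∀ p : ℤ, -(D : ℤ) ≤ p → p + ml t ≤ n + D → ¬ OccursAt (x : ℤ → A) (u t) p) →
    OccursAt ((φ x : ℤ → A)) v 0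

end Defs2

/-- A countable discrete group is amenable if it admits a Følner sequence. -/
def FolnerAmenable (G : Type*) [Group G] : Prop :=
  ∃ F : ℕ → Set G, (∀ k, (F k).Finite) ∧
    (∀ g : G, ∀ᶠ k in atTop, g ∈ F k) ∧
    ∀ g : G, Tendsto (fun k => ((symmDiff (g • F k) (F k)).ncard : ℝ) / ((F k).ncard : ℝ))
      atTop (𝓝 0)

/-!
On an occurrence of `w̃` the codes of `φ` and `ψ` read the same word, so `φ x` and `ψ x` agree on
the middle `|w̃| - 2R` places. Applying the range-`R` code of `φ⁻¹` to both, `(φ⁻¹ψ) x` agrees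
with `x` on the middle `|w| = |w̃| - 4R` places, i.e. it shows `w` at offset `2R`. Since `w` extends
uniquely `2R` times, the surrounding word of length `|w̃|` is forced to be `w̃`.
-/

section Words

variable {A : Type*}

theorem OccursAt.congr {n : ℕ} {x y : ℤ → A} {w : Fin n → A} {j : ℤ} (hx : OccursAt x w j)
    (hxy : Set.EqOn x y (Set.Ico j (j + n))) : OccursAt y w j := fun i =>
  hxy (x := j + i) (by simp only [Set.mem_Ico]; omega) ▸ hx i

theorem OccursAt.of_extension {n L : ℕ} {w : Fin n → A} {u : Fin (n + 2 * L) → A}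
    (hu : ∀ i : Fin n, u ⟨L + (i : ℕ), by have := i.isLt; omega⟩ = w i) {x : ℤ → A} {j : ℤ}
    (hx : OccursAt x u j) : OccursAt x w (j + L) := fun i => by
  have := hx ⟨L + i, by omega⟩
  rw [hu] at this
  rw [← this]
  push_cast
  ring_nf

theorem ExtendsUniquely.occursAt_of_occursAt {X : Set (ℤ → A)} {n L : ℕ} {w : Fin n → A}
    (hext : ExtendsUniquely X w L) {u : Fin (n + 2 * L) → A} (huX : InLanguage X u)
    (hu : ∀ i : Fin n, u ⟨L + (i : ℕ), by have := i.isLt; omega⟩ = w i) {x : ℤ → A}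
    (hxX : x ∈ X) (hx : OccursAt x w L) : OccursAt x u 0 := by
  set v : Fin (n + 2 * L) → A := fun i => x i
  have hvX : InLanguage X v := ⟨x, hxX, fun i => by simp [v]⟩
  have hv : ∀ i : Fin n, v ⟨L + (i : ℕ), by have := i.isLt; omega⟩ = w i := fun i => by
    simpa [v] using hx i
  have hvu : v = u := hext.unique ⟨hvX, hv⟩ ⟨huX, hu⟩
  intro i
  simp [← hvu, v]

end Words

namespace IsBlockCode

variable {A : Type*} {X : Set (ℤ → A)} {R : ℕ} {φ ψ : Equiv.Perm ↥X}
  {f g : (Fin (2 * R + 1) → A) → A}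

theorem eqOn_of_eqOn (hf : IsBlockCode X R φ f) {x y : ↥X} {a b : ℤ}
    (hxy : Set.EqOn (x : ℤ → A) y (Set.Ico (a - R) (b + R))) :
    Set.EqOn (φ x : ℤ → A) (φ y) (Set.Ico a b) := by
  intro i hi
  rw [hf x i, hf y i]
  congr 1
  funext j
  apply hxy
  simp only [Set.mem_Ico] at hi ⊢
  have := j.isLt
  omega

theorem apply_eq_applyCode (hf : IsBlockCode X R φ f) {m : ℕ} {v : Fin m → A} {x : ↥X}
    (hx : OccursAt (x : ℤ → A) v 0) (i : Fin (m - 2 * R)) :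
    (φ x : ℤ → A) (R + i) = applyCode f v i := by
  rw [hf x]
  congr 1
  funext j
  have := hx ⟨i + j, by omega⟩
  rw [← this]
  push_cast
  ring_nf

theorem eqOn_of_applyCode_eq (hf : IsBlockCode X R φ f) (hg : IsBlockCode X R ψ g) {m : ℕ}
    {v : Fin m → A} (hfg : applyCode f v = applyCode g v) {x : ↥X}
    (hx : OccursAt (x : ℤ → A) v 0) :
    Set.EqOn (φ x : ℤ → A) (ψ x) (Set.Ico R (R + (m - 2 * R : ℕ))) := by
  intro i hi
  simp only [Set.mem_Ico] at hi
  obtain ⟨k, rfl⟩ : ∃ k : ℕ, i = R + k := ⟨(i - R).toNat, by omega⟩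
  have hk : k < m - 2 * R := by omega
  rw [hf.apply_eq_applyCode hx ⟨k, hk⟩, hg.apply_eq_applyCode hx ⟨k, hk⟩, hfg]

theorem eqOn_inv_mul_apply (hf : IsBlockCode X R φ f) {f' : (Fin (2 * R + 1) → A) → A}
    (hf' : IsBlockCode X R φ⁻¹ f') (hg : IsBlockCode X R ψ g) {m : ℕ} {v : Fin m → A}
    (hfg : applyCode f v = applyCode g v) {x : ↥X} (hx : OccursAt (x : ℤ → A) v 0) :
    Set.EqOn ((φ⁻¹ * ψ) x : ℤ → A) x (Set.Ico (2 * R) (m - 2 * R : ℕ)) := by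
  have hφψ := hf.eqOn_of_applyCode_eq hg hfg hx
  have := hf'.eqOn_of_eqOn (a := 2 * R) (b := (m - 2 * R : ℕ)) (x := ψ x) (y := φ x)
    (hφψ.symm.mono fun i hi => by simp only [Set.mem_Ico] at hi ⊢; omega)
  simpa using this

end IsBlockCode

/-- **Lemma 2.1.** Let `R ∈ ℕ ∪ {0}` and `φ, ψ ∈ Aut_R(X)`.  Suppose `w ∈ L(X)` extends
uniquely `2R` times to the right and left, with (unique) extension `w̃` of length `|w| + 4R`.
If `φ(w̃) = ψ(w̃)` (applying the range-`R` block codes), then `φ⁻¹ ∘ ψ` preserves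
occurrences of `w̃`. -/
theorem preservesOcc_of_eq_on_extension {A : Type*} (X : Set (ℤ → A))
    (R : ℕ) {n : ℕ} (w : Fin n → A)
    (hext : ExtendsUniquely X w (2 * R))
    (wt : Fin (n + 2 * (2 * R)) → A) (hwtL : InLanguage X wt)
    (hwt : ∀ i : Fin n, wt ⟨2 * R + (i : ℕ), by have := i.isLt; omega⟩ = w i)
    (φ ψ : Equiv.Perm ↥X)
    (f : (Fin (2 * R + 1) → A) → A) (hf : IsBlockCode X R φ f)
    (hfinv : ∃ f', IsBlockCode X R φ⁻¹ f')
    (g : (Fin (2 * R + 1) → A) → A) (hg : IsBlockCode X R ψ g)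
    (heq : applyCode f wt = applyCode g wt) :
    PreservesOcc X (φ⁻¹ * ψ) wt := by
  obtain ⟨f', hf'⟩ := hfinv
  intro x hx
  have hxw : OccursAt (x : ℤ → A) w (2 * R) := by simpa using hx.of_extension hwt
  have hmiddle := hf.eqOn_inv_mul_apply hf' hg heq hx
  refine hext.occursAt_of_occursAt hwtL hwt ((φ⁻¹ * ψ) x).2 (hxw.congr ?_)
  exact hmiddle.symm.mono fun i hi => by simp only [Set.mem_Ico] at hi ⊢; omega
end

section
/- Let (X,σ) be a subshift and w ∈ L(X). If the cylinder set [w]₀⁺ ∩ X contains at least one aperiodic point, then for all n ≥ |w| we have P_{X(w)}(n) ≤ P_X(n) − (n − |w| + 1), where X(w) is the subshift of X obtained by forbidding the word w. -/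
open Filter Topology Pointwise

/-!
Take an aperiodic point `x ∈ [w]₀⁺ ∩ X`. Every length-`n` window of `x` that contains an
occurrence of `w` lies in `L_n(X) \ L_n(X(w))`, so it suffices to find `n - |w| + 1` distinct such
windows. If every length-`n` window of `x` contains `w`, Morse–Hedlund does it: an aperiodic
sequence has at least `n + 1` distinct windows of length `n`. Otherwise some occurrence `p` of `w`
is followed (or preceded) by more than `n - |w|` positions without an occurrence, and then the
windows starting at `p - j`, `0 ≤ j ≤ n - |w|`, are pairwise distinct: two of them coinciding
would reproduce the occurrence at `p` at distance `d ≤ n - |w|` on both sides of `p`.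
-/

open Set Function

section Windows

variable {A : Type*}

def window (x : ℤ → A) (a : ℤ) (k : ℕ) : Fin k → A := fun i => x (a + i)

theorem translate_mem_of_shift_image_eq {X : Set (ℤ → A)} (hX : shift '' X = X) {x : ℤ → A}
    (hx : x ∈ X) (a : ℤ) : (fun i => x (i + a)) ∈ X := by
  induction a using Int.induction_on with
  | zero => simpa using hx
  | succ a ih =>
    rw [← hX]
    exact ⟨_, ih, funext fun i => by simp only [shift]; ring_nf⟩
  | pred a ih =>
    rw [← hX] at ih
    obtain ⟨z, hz, hze⟩ := ih
    convert hz using 1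
    funext i
    have := congrFun hze (i - 1)
    simp only [shift, sub_add_cancel] at this
    rw [this]
    ring_nf

theorem inLanguage_window {X : Set (ℤ → A)} (hX : shift '' X = X) {x : ℤ → A} (hx : x ∈ X)
    (a : ℤ) (k : ℕ) : InLanguage X (window x a k) :=
  ⟨_, translate_mem_of_shift_image_eq hX hx a, fun i => by simp [window, add_comm]⟩

theorem OccursAt.of_occursAt_window {m n : ℕ} {x y : ℤ → A} {w : Fin m → A} {a b c : ℤ}
    (hy : OccursAt y (window x a n) b) (hc : OccursAt x w c) (hac : a ≤ c)
    (hcn : c + m ≤ a + n) : OccursAt y w (b + (c - a)) := by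
  intro i
  have hi : (c - a + i).toNat < n := by have := i.isLt; omega
  have := hy ⟨_, hi⟩
  simp only [window, Int.toNat_of_nonneg (show 0 ≤ c - a + i by omega)] at this
  rw [← hc i, add_assoc, this]
  ring_nf

theorem not_inLanguage_forbid_window {X : Set (ℤ → A)} {m n : ℕ} {x : ℤ → A} {w : Fin m → A}
    {a c : ℤ} (hc : OccursAt x w c) (hac : a ≤ c) (hcn : c + m ≤ a + n) :
    ¬ InLanguage (Forbid X w) (window x a n) := by
  rintro ⟨y, ⟨-, hy⟩, hocc⟩
  exact hy _ (hocc.of_occursAt_window hc hac hcn)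

theorem window_castSucc (x : ℤ → A) (a : ℤ) (k : ℕ) :
    (fun i : Fin k => window x a (k + 1) i.castSucc) = window x a k := by
  funext i
  simp [window]

theorem window_succ (x : ℤ → A) (a : ℤ) (k : ℕ) :
    (fun i : Fin k => window x a (k + 1) i.succ) = window x (a + 1) k := by
  funext i
  simp only [window, Fin.val_succ]
  push_cast
  ring_nf

theorem range_window_eq_range_comp_castSucc (x : ℤ → A) (k : ℕ) :
    range (window x · k) =
      range ((fun u : Fin (k + 1) → A => fun i : Fin k => u i.castSucc) ∘ (window x · (k + 1))) :=
  congrArg range (funext fun a => (window_castSucc x a k).symm)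

theorem range_window_eq_range_comp_succ (x : ℤ → A) (k : ℕ) :
    range (window x · k) =
      range ((fun u : Fin (k + 1) → A => fun i : Fin k => u i.succ) ∘ (window x · (k + 1))) := by
  rw [← (add_right_surjective (1 : ℤ)).range_comp]
  exact congrArg range (funext fun a => (window_succ x a k).symm)

end Windows

theorem complexity_add_ncard_le {A : Type*} [Finite A] {X Y : Set (ℤ → A)} (hYX : Y ⊆ X) {n : ℕ}
    {D : Set (Fin n → A)} (hD : ∀ u ∈ D, InLanguage X u ∧ ¬ InLanguage Y u) :
    complexity Y n + D.ncard ≤ complexity X n := by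
  have hdisj : Disjoint {u : Fin n → A | InLanguage Y u} D :=
    disjoint_left.2 fun u hu huD => (hD u huD).2 hu
  rw [complexity, complexity, ← ncard_union_eq hdisj]
  refine ncard_le_ncard ?_
  rintro u (⟨y, hy, hocc⟩ | hu)
  · exact ⟨y, hYX hy, hocc⟩
  · exact (hD u hu).1

theorem eq_of_comp_eq_of_ncard_range_le {ι β γ : Type*} {g : ι → β} {π : β → γ}
    (hg : (range g).Finite) (h : (range g).ncard ≤ (range (π ∘ g)).ncard) {a b : ι}
    (hab : π (g a) = π (g b)) : g a = g b := by
  rw [range_comp] at h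
  exact injOn_of_ncard_image_eq (le_antisymm (ncard_image_le hg) h) hg
    (mem_range_self a) (mem_range_self b) hab

section MorseHedlund

variable {A : Type*} [Finite A] {x : ℤ → A}

section NoGrowth

-- When the number of windows does not grow from length `k` to `k + 1`, every `k`-window of `x`
-- determines the letters on both of its sides.
variable {k : ℕ} (h : (range (window x · (k + 1))).ncard ≤ (range (window x · k)).ncard)
include h

theorem window_succ_eq_of_window_eq {a b : ℤ} (hab : window x a k = window x b k) :
    window x a (k + 1) = window x b (k + 1) := by
  rw [range_window_eq_range_comp_castSucc x k] at h
  refine eq_of_comp_eq_of_ncard_range_le (toFinite _) h ?_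
  simpa only [comp_apply, window_castSucc] using hab

theorem window_succ_eq_of_window_add_one_eq {a b : ℤ}
    (hab : window x (a + 1) k = window x (b + 1) k) :
    window x a (k + 1) = window x b (k + 1) := by
  rw [range_window_eq_range_comp_succ x k] at h
  refine eq_of_comp_eq_of_ncard_range_le (toFinite _) h ?_
  simpa only [comp_apply, window_succ] using hab

theorem window_add_one_eq_iff {a b : ℤ} :
    window x (a + 1) k = window x (b + 1) k ↔ window x a k = window x b k := by
  constructor
  · intro hab
    rw [← window_castSucc x a k, ← window_castSucc x b k,
      window_succ_eq_of_window_add_one_eq h hab]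
  · intro hab
    rw [← window_succ x a k, ← window_succ x b k, window_succ_eq_of_window_eq h hab]

theorem exists_periodic_of_ncard_range_window_succ_le : ∃ p > 0, Periodic x p := by
  obtain ⟨a, b, hne, hab⟩ := Finite.exists_ne_map_eq_of_infinite (window x · k)
  have htranslate : ∀ c : ℤ, window x (a + c) k = window x (b + c) k := by
    intro c
    induction c using Int.induction_on with
    | zero => simpa using hab
    | succ c ih => simpa only [add_assoc] using (window_add_one_eq_iff h).2 ih
    | pred c ih =>
      rw [← window_add_one_eq_iff h]
      convert ih using 2 <;> ring
  have hper : Periodic x (b - a) := fun t => by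
    have := congrFun (window_succ_eq_of_window_eq h (htranslate (t - a))) 0
    simp only [window, Fin.val_zero, Nat.cast_zero, add_zero, add_sub_cancel] at this
    rw [this]
    ring_nf
  rcases hne.lt_or_gt with hlt | hgt
  · exact ⟨b - a, by omega, hper⟩
  · exact ⟨-(b - a), by omega, hper.neg⟩

end NoGrowth

theorem IsAperiodic.ncard_range_window_lt_succ (hx : IsAperiodic x) (k : ℕ) :
    (range (window x · k)).ncard < (range (window x · (k + 1))).ncard := by
  by_contra! h
  obtain ⟨p, hp, hper⟩ := exists_periodic_of_ncard_range_window_succ_le h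
  exact hx p hp (funext hper)

theorem IsAperiodic.add_one_le_ncard_range_window (hx : IsAperiodic x) :
    ∀ n : ℕ, n + 1 ≤ (range (window x · n)).ncard
  | 0 => (ncard_pos (toFinite _)).2 (range_nonempty _)
  | n + 1 => (hx.add_one_le_ncard_range_window n).trans_lt (hx.ncard_range_window_lt_succ n)

end MorseHedlund

theorem Int.exists_one_sided_gap {P : ℤ → Prop} {z a T : ℤ} (hz : P z)
    (ha : ∀ c, a ≤ c → c ≤ a + T → ¬ P c) :
    ∃ p, P p ∧ ((∀ d, 0 < d → d ≤ T → ¬ P (p + d)) ∨ (∀ d, 0 < d → d ≤ T → ¬ P (p - d))) := by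
  classical
  rcases lt_or_ge z a with hza | haz
  · obtain ⟨p, ⟨hp, hpa⟩, hmax⟩ :=
      Int.exists_greatest_of_bdd (P := fun c => P c ∧ c < a) ⟨a, fun c hc => hc.2.le⟩ ⟨z, hz, hza⟩
    refine ⟨p, hp, .inl fun d hd hdT hpd => ?_⟩
    by_cases hpda : p + d < a
    · linarith [hmax _ ⟨hpd, hpda⟩]
    · exact ha _ (by omega) (by omega) hpd
  · have hzT : a + T < z := by
      by_contra! hzT
      exact ha z haz hzT hz
    obtain ⟨p, ⟨hp, hpa⟩, hmin⟩ := Int.exists_least_of_bdd (P := fun c => P c ∧ a + T < c)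
      ⟨a + T, fun c hc => hc.2.le⟩ ⟨z, hz, hzT⟩
    refine ⟨p, hp, .inr fun d hd hdT hpd => ?_⟩
    by_cases hpda : a + T < p - d
    · linarith [hmin _ ⟨hpd, hpda⟩]
    · exact ha _ (by omega) (by omega) hpd

section WindowsContaining

variable {A : Type*} {m n : ℕ} {x : ℤ → A} {w : Fin m → A}

def windowsContaining (x : ℤ → A) (w : Fin m → A) (n : ℕ) : Set (Fin n → A) :=
  {u | ∃ a c : ℤ, OccursAt x w c ∧ a ≤ c ∧ c + m ≤ a + n ∧ window x a n = u}

theorem windowsContaining_subset (X : Set (ℤ → A)) (hX : shift '' X = X) (hx : x ∈ X) :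
    windowsContaining x w n ⊆ {u | InLanguage X u ∧ ¬ InLanguage (Forbid X w) u} := by
  rintro _ ⟨a, c, hc, hac, hcn, rfl⟩
  exact ⟨inLanguage_window hX hx a n, not_inLanguage_forbid_window hc hac hcn⟩

theorem le_ncard_windowsContaining_of_gap [Finite A] (hmn : m ≤ n) {p : ℤ} (hp : OccursAt x w p)
    (hgap : ∀ d : ℤ, 0 < d → d ≤ n - m → OccursAt x w (p + d) → OccursAt x w (p - d) → False) :
    n - m + 1 ≤ (windowsContaining x w n).ncard := by
  have hinj : Injective fun j : Fin (n - m + 1) => window x (p - j) n := by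
    refine Injective.of_lt_imp_ne fun i j hij heq => ?_
    have hij' : (i : ℤ) < j := by exact_mod_cast hij
    have hj : (j : ℤ) ≤ n - m := by have := j.isLt; omega
    have hleft : OccursAt x (window x (p - i) n) (p - j) := heq ▸ fun _ => rfl
    have hright : OccursAt x (window x (p - j) n) (p - i) := heq ▸ fun _ => rfl
    refine hgap (j - i) (by omega) (by omega) ?_ ?_
    · convert hright.of_occursAt_window hp (by omega) (by omega) using 1
      ring
    · convert hleft.of_occursAt_window hp (by omega) (by omega) using 1
      ring
  calc n - m + 1 = (range fun j : Fin (n - m + 1) => window x (p - j) n).ncard := by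
        rw [ncard_range_of_injective hinj, Nat.card_eq_fintype_card, Fintype.card_fin]
    _ ≤ (windowsContaining x w n).ncard := by
        refine ncard_le_ncard ?_ (toFinite _)
        rintro _ ⟨j, rfl⟩
        exact ⟨p - j, p, hp, by omega, by have := j.isLt; omega, rfl⟩

theorem le_ncard_windowsContaining [Finite A] (hx : IsAperiodic x) {z : ℤ} (hz : OccursAt x w z)
    (hmn : m ≤ n) : n - m + 1 ≤ (windowsContaining x w n).ncard := by
  by_cases hcover : ∀ a : ℤ, ∃ c, OccursAt x w c ∧ a ≤ c ∧ c + m ≤ a + n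
  · have hsub : range (window x · n) ⊆ windowsContaining x w n := by
      rintro _ ⟨a, rfl⟩
      obtain ⟨c, hc, hac, hcn⟩ := hcover a
      exact ⟨a, c, hc, hac, hcn, rfl⟩
    have hcount := hx.add_one_le_ncard_range_window n
    have hle := ncard_le_ncard hsub (toFinite _)
    omega
  · push Not at hcover
    obtain ⟨a, ha⟩ := hcover
    obtain ⟨p, hp, hgap⟩ := Int.exists_one_sided_gap (T := n - m) hz
      fun c hac hcT hc => by linarith [ha c hc hac]
    refine le_ncard_windowsContaining_of_gap hmn hp fun d hd hdT hpd hmd => ?_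
    exact hgap.elim (· d hd hdT hpd) (· d hd hdT hmd)

end WindowsContaining

theorem complexity_forbid_le_general {A : Type*} [Fintype A]
    (X : Set (ℤ → A)) (hX_inv : shift '' X = X)
    {m : ℕ} (w : Fin m → A)
    (hap : ∃ x ∈ X, OccursAt x w 0 ∧ IsAperiodic x)
    (n : ℕ) (hn : m ≤ n) :
    complexity (Forbid X w) n + (n - m + 1) ≤ complexity X n := by
  obtain ⟨x, hxX, hx0, hxap⟩ := hap
  calc complexity (Forbid X w) n + (n - m + 1)
      ≤ complexity (Forbid X w) n + (windowsContaining x w n).ncard :=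
        Nat.add_le_add_left (le_ncard_windowsContaining hxap hx0 hn) _
    _ ≤ complexity X n :=
        complexity_add_ncard_le (fun _ hy => hy.1) (windowsContaining_subset X hX_inv hxX)

/-- **Lemma 3.1.** If `(X, σ)` is a subshift, `w ∈ L(X)`, and the cylinder set `[w]₀⁺ ∩ X`
contains an aperiodic point, then for all `n ≥ |w|` we have
`P_{X(w)}(n) ≤ P_X(n) − (n − |w| + 1)`. -/
theorem complexity_forbid_le {A : Type*} [Fintype A] [TopologicalSpace A] [DiscreteTopology A]
    (X : Set (ℤ → A)) (hX_cl : IsClosed X) (hX_inv : shift '' X = X)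
    {m : ℕ} (w : Fin m → A) (hw : InLanguage X w)
    (hap : ∃ x ∈ X, OccursAt x w 0 ∧ IsAperiodic x)
    (n : ℕ) (hn : m ≤ n) :
    complexity (Forbid X w) n + (n - m + 1) ≤ complexity X n :=
  complexity_forbid_le_general X hX_inv w hap n hn
end

section
/- Let d, N ∈ ℕ and let (X,σ) be a subshift with P_X(n) ≤ n^d for all n ≥ N. For each n define k_n := min{k ∈ ℕ : no word w ∈ L_n(X) extends uniquely k times to the right and left}. Then there exists C > 0 (which can be taken to be log 2/(4d)) such that for all n ≥ N there exists m ≤ n·log n satisfying k_m ≥ Cn. -/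
open Filter Topology Pointwise

/-!
If for every `m ≤ n log n` some `k < C n` admits no word of length `m` extending uniquely `k`
times, then every word of length `m` has two distinct extensions of length `m + 2k`, so
`P(m + 2k) ≥ 2 P(m)`. Doubling `T = ⌊2d log₂ n⌋` times, starting from `P(0) = 1`, stays within
length `2 C n T ≤ n log n` and yields `2^T > (n log n)^d` words, against `P ≤ (n log n)^d`.
-/

section Language

variable {A : Type*} {X : Set (ℤ → A)}

def centralSubword {m : ℕ} (k : ℕ) (u : Fin (m + 2 * k) → A) : Fin m → A :=
  fun i => u ⟨k + i, by omega⟩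

lemma extendsUniquely_iff {m : ℕ} (w : Fin m → A) (k : ℕ) :
    ExtendsUniquely X w k ↔ ∃! u, InLanguage X u ∧ centralSubword k u = w := by
  simp only [ExtendsUniquely, centralSubword, funext_iff]

lemma exists_mem_forall_apply_eq_apply_add (hX : shift '' X = X) {x : ℤ → A} (hx : x ∈ X)
    (j : ℤ) : ∃ y ∈ X, ∀ i, y i = x (i + j) := by
  induction j with
  | zero => exact ⟨x, hx, fun i => by rw [add_zero]⟩
  | succ j ih =>
    obtain ⟨y, hy, hyx⟩ := ih
    refine ⟨shift y, hX ▸ Set.mem_image_of_mem shift hy, fun i => ?_⟩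
    rw [shift, hyx, add_right_comm, add_assoc]
  | pred j ih =>
    obtain ⟨y, hy, hyx⟩ := ih
    obtain ⟨z, hz, rfl⟩ : y ∈ shift '' X := hX.symm ▸ hy
    refine ⟨z, hz, fun i => ?_⟩
    have hzi := hyx (i - 1)
    rw [shift, sub_add_cancel] at hzi
    rw [hzi]
    ring_nf

lemma inLanguage_of_occursAt (hX : shift '' X = X) {x : ℤ → A} (hx : x ∈ X) {m : ℕ}
    {w : Fin m → A} {j : ℤ} (h : OccursAt x w j) : InLanguage X w := by
  obtain ⟨y, hy, hyx⟩ := exists_mem_forall_apply_eq_apply_add hX hx j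
  exact ⟨y, hy, fun i => by rw [hyx, zero_add, add_comm, h i]⟩

lemma inLanguage_centralSubword (hX : shift '' X = X) {m k : ℕ} {u : Fin (m + 2 * k) → A}
    (hu : InLanguage X u) : InLanguage X (centralSubword k u) := by
  obtain ⟨x, hx, hux⟩ := hu
  refine inLanguage_of_occursAt hX hx (j := k) fun i => ?_
  simpa [centralSubword, add_comm] using hux ⟨k + i, by omega⟩

lemma exists_centralSubword_eq (hX : shift '' X = X) {m : ℕ} {w : Fin m → A}
    (hw : InLanguage X w) (k : ℕ) : ∃ u : Fin (m + 2 * k) → A, InLanguage X u ∧ centralSubword k u = w := by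
  obtain ⟨x, hx, hwx⟩ := hw
  refine ⟨fun i => x (i - k), inLanguage_of_occursAt hX hx (j := -k) fun i => ?_, ?_⟩
  · ring_nf
  · funext i
    simpa [centralSubword] using hwx i

open Finset in
lemma complexity_eq_card [Fintype A] (n : ℕ) [DecidablePred (InLanguage X (n := n))] :
    complexity X n = #{w : Fin n → A | InLanguage X w} := by
  rw [complexity, ← Set.ncard_coe_finset, coe_filter_univ]

lemma complexity_zero (hX : X.Nonempty) : complexity X 0 = 1 := by
  obtain ⟨x, hx⟩ := hX
  rw [complexity, Set.ncard_eq_one]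
  exact ⟨Fin.elim0, Set.eq_singleton_iff_unique_mem.2
    ⟨⟨x, hx, fun i => i.elim0⟩, fun w _ => funext fun i => i.elim0⟩⟩

lemma complexity_mono [Finite A] {m n : ℕ} (h : m ≤ n) : complexity X m ≤ complexity X n := by
  let restrict : (Fin n → A) → Fin m → A := fun u i => u (Fin.castLE h i)
  refine (Set.ncard_le_ncard ?_ (Set.toFinite _)).trans
    (Set.ncard_image_le (f := restrict) (Set.toFinite {u | InLanguage X u}))
  rintro w ⟨x, hx, hwx⟩
  exact ⟨fun i => x i, ⟨x, hx, fun i => by rw [zero_add]⟩,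
    funext fun i => by simpa [restrict] using hwx i⟩

open Finset in
lemma two_mul_complexity_le [Fintype A] (hX : shift '' X = X) {m k : ℕ}
    (h : ∀ w : Fin m → A, InLanguage X w → ¬ ExtendsUniquely X w k) :
    2 * complexity X m ≤ complexity X (m + 2 * k) := by
  classical
  rw [complexity_eq_card, complexity_eq_card]
  refine mul_card_image_le_card_of_maps_to (f := centralSubword k) ?_ 2 fun w hw => ?_
  · simp only [mem_filter_univ]
    exact fun u => inLanguage_centralSubword hX
  · -- the fibre over a language word contains two distinct extensions of it
    rw [mem_filter_univ] at hw
    obtain ⟨u₀, hu₀, rfl⟩ := exists_centralSubword_eq hX hw k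
    obtain ⟨u₁, ⟨hu₁, hmid⟩, hne⟩ :
        ∃ u₁, (InLanguage X u₁ ∧ centralSubword k u₁ = centralSubword k u₀) ∧ u₁ ≠ u₀ := by
      by_contra! hall
      exact h _ hw ((extendsUniquely_iff _ k).2 ⟨u₀, ⟨hu₀, rfl⟩, hall⟩)
    exact one_lt_card.2 ⟨u₁, by simp [hu₁, hmid], u₀, by simp [hu₀], hne⟩

lemma exists_two_pow_le_complexity [Fintype A] (hX_ne : X.Nonempty) (hX : shift '' X = X)
    {s B : ℝ} (hs : 0 ≤ s) (h : ∀ m : ℕ, (m : ℝ) ≤ B → ∃ k : ℕ, (k : ℝ) ≤ s ∧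
      ∀ w : Fin m → A, InLanguage X w → ¬ ExtendsUniquely X w k) :
    ∀ t : ℕ, 2 * s * t ≤ B → ∃ m : ℕ, (m : ℝ) ≤ 2 * s * t ∧ 2 ^ t ≤ complexity X m
  | 0, _ => ⟨0, by simp, (complexity_zero hX_ne).ge⟩
  | t + 1, hB => by
    have hst : 2 * s * t ≤ 2 * s * (t + 1 : ℕ) := by gcongr; omega
    obtain ⟨m, hm, hcm⟩ := exists_two_pow_le_complexity hX_ne hX hs h t (hst.trans hB)
    obtain ⟨k, hk, hkm⟩ := h m (hm.trans (hst.trans hB))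
    refine ⟨m + 2 * k, ?_, ?_⟩
    · push_cast at hm ⊢
      linarith
    · rw [pow_succ']
      exact (Nat.mul_le_mul_left 2 hcm).trans (two_mul_complexity_le hX hkm)

lemma complexity_le_pow [Finite A] {d N m : ℕ} {B : ℝ}
    (hP : ∀ n : ℕ, N ≤ n → complexity X n ≤ n ^ d) (hm : m ≤ B) (hN : N ≤ B) :
    (complexity X m : ℝ) ≤ B ^ d :=
  calc (complexity X m : ℝ) ≤ complexity X (max m N) := by
        exact_mod_cast complexity_mono (le_max_left _ _)
    _ ≤ ((max m N : ℕ) : ℝ) ^ d := by exact_mod_cast hP _ (le_max_right _ _)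
    _ ≤ B ^ d := by
        gcongr
        push_cast
        exact max_le hm hN

end Language

section Bounds

open Real

lemma two_mul_log_lt_self {x : ℝ} (hx : 0 < x) : 2 * log x < x := by
  rcases eq_or_ne x 1 with rfl | hx1
  · simp
  have hsq : x = exp (log x / 2) ^ 2 := by
    rw [← exp_nat_mul, Nat.cast_two, mul_div_cancel₀ _ two_ne_zero, exp_log hx]
  set y := log x / 2 with hy
  have hexp : y + 1 < exp y :=
    add_one_lt_exp (div_ne_zero (log_ne_zero_of_pos_of_ne_one hx hx1) two_ne_zero)
  rcases le_or_gt (y + 1) 0 with hneg | hpos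
  · linarith
  · have : (y + 1) ^ 2 < exp y ^ 2 := by gcongr
    nlinarith [sq_nonneg (y - 1)]

lemma two_mul_mul_log_pow_lt {x : ℝ} (hx : 1 < x) {d : ℕ} (hd : d ≠ 0) :
    2 * (x * log x) ^ d < x ^ (2 * d) := by
  have hlog : 0 < log x := log_pos hx
  have hq : 2 < x / log x := (lt_div_iff₀ hlog).2 (two_mul_log_lt_self (by linarith))
  calc 2 * (x * log x) ^ d < (x / log x) * (x * log x) ^ d := by gcongr
    _ ≤ (x / log x) ^ d * (x * log x) ^ d := by gcongr; exact le_self_pow₀ (by linarith) hd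
    _ = x ^ (2 * d) := by rw [← mul_pow, pow_mul]; field_simp

lemma pow_lt_two_pow_floor_add_one {x : ℝ} (hx : 0 < x) (a : ℕ) :
    x ^ a < 2 ^ (⌊a * logb 2 x⌋₊ + 1) := by
  conv_lhs => rw [← rpow_logb two_pos (by norm_num) hx]
  rw [← rpow_mul_natCast two_pos.le, ← rpow_natCast, mul_comm]
  exact rpow_lt_rpow_of_exponent_lt one_lt_two (by exact_mod_cast Nat.lt_floor_add_one _)

lemma mul_log_pow_lt_two_pow_floor {x : ℝ} (hx : 1 < x) {d : ℕ} (hd : d ≠ 0) :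
    (x * log x) ^ d < 2 ^ ⌊(2 * d : ℕ) * logb 2 x⌋₊ := by
  have hlower := pow_lt_two_pow_floor_add_one (by linarith) (2 * d)
  have hgap := two_mul_mul_log_pow_lt hx hd
  rw [pow_succ] at hlower
  linarith

lemma two_mul_log_two_div_mul_floor_le {d : ℕ} {x : ℝ} (hx : 1 ≤ x) :
    2 * (log 2 / (4 * d) * x) * ⌊(2 * d : ℕ) * logb 2 x⌋₊ ≤ x * log x := by
  rcases Nat.eq_zero_or_pos d with rfl | hd
  · simp only [CharP.cast_eq_zero, mul_zero, div_zero, zero_mul]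
    exact mul_nonneg (by linarith) (log_nonneg hx)
  calc 2 * (log 2 / (4 * d) * x) * ⌊(2 * d : ℕ) * logb 2 x⌋₊
      ≤ 2 * (log 2 / (4 * d) * x) * ((2 * d : ℕ) * logb 2 x) := by
        gcongr
        exact Nat.floor_le (by positivity [logb_nonneg one_lt_two hx])
    _ = x * log x := by
        rw [← log_div_log]
        push_cast
        field_simp
        norm_num

end Bounds

theorem exists_word_extending_uniquely_general {A : Type*} [Fintype A] (d N : ℕ) (hd : 0 < d)
    (X : Set (ℤ → A)) (hX_ne : X.Nonempty) (hX_inv : shift '' X = X)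
    (hP : ∀ n : ℕ, N ≤ n → complexity X n ≤ n ^ d) :
    ∃ C : ℝ, 0 < C ∧ C = Real.log 2 / (4 * d) ∧
      ∀ n : ℕ, N ≤ n → ∃ m : ℕ, (m : ℝ) ≤ (n : ℝ) * Real.log n ∧
        ∀ k : ℕ, 0 < k → (∀ w : Fin m → A, InLanguage X w → ¬ ExtendsUniquely X w k) →
          C * n ≤ (k : ℝ) := by
  have hd' : (1 : ℝ) ≤ d := by exact_mod_cast hd
  have hlog2 : 0 < Real.log 2 := Real.log_pos one_lt_two
  refine ⟨_, by positivity, rfl, fun n hn => ?_⟩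
  by_contra! h
  -- at `m = 0` the assumption forces `1 ≤ k < C n`, so `n` is large
  obtain ⟨k, hk, -, hkC⟩ := h 0 (by rw [Nat.cast_zero]; positivity)
  have hn4 : (4 : ℝ) < n := by
    have h1 : (1 : ℝ) < Real.log 2 / (4 * d) * n :=
      (by exact_mod_cast hk : (1 : ℝ) ≤ k).trans_lt hkC
    rw [div_mul_eq_mul_div, one_lt_div (by positivity)] at h1
    nlinarith [Real.log_two_lt_d9]
  have hlogn : 1 < Real.log n := by
    rw [Real.lt_log_iff_exp_lt (by linarith)]
    linarith [Real.exp_one_lt_d9]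
  have hlength := two_mul_log_two_div_mul_floor_le (d := d) (x := n) (by linarith)
  obtain ⟨m, hm, hTm⟩ := exists_two_pow_le_complexity hX_ne hX_inv (by positivity)
    (fun m hm => (h m hm).imp fun k hk => ⟨hk.2.2.le, hk.2.1⟩) _ hlength
  have hN : (N : ℝ) ≤ n * Real.log n := by
    nlinarith [(by exact_mod_cast hn : (N : ℝ) ≤ n)]
  have hupper := (by exact_mod_cast hTm : (2 : ℝ) ^ _ ≤ complexity X m).trans
    (complexity_le_pow hP (hm.trans hlength) hN)
  exact hupper.not_gt (mul_log_pow_lt_two_pow_floor (by linarith) hd.ne')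

/-- **Lemma 3.3.** Let `d, N ∈ ℕ` and suppose `(X, σ)` is a subshift with `P_X(n) ≤ n^d`
for all `n ≥ N`.  Let `k_m` be the least positive `k` such that no word of length `m` in
the language of `X` extends uniquely `k` times to the right and left.  Then there exists
`C > 0` (which can be taken to be `log 2 / (4d)`) such that for all `n ≥ N` there exists
`m ≤ n log n` with `k_m ≥ Cn` (i.e. every positive `k` such that no word of length `m`
extends uniquely `k` times satisfies `k ≥ Cn`). -/
theorem exists_word_extending_uniquely {A : Type*} [Fintype A] [TopologicalSpace A]
    [DiscreteTopology A] (d N : ℕ) (hd : 0 < d) (hN : 0 < N)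
    (X : Set (ℤ → A)) (hX_ne : X.Nonempty) (hX_cl : IsClosed X) (hX_inv : shift '' X = X)
    (hP : ∀ n : ℕ, N ≤ n → complexity X n ≤ n ^ d) :
    ∃ C : ℝ, 0 < C ∧ C = Real.log 2 / (4 * d) ∧
      ∀ n : ℕ, N ≤ n → ∃ m : ℕ, (m : ℝ) ≤ (n : ℝ) * Real.log n ∧
        ∀ k : ℕ, 0 < k → (∀ w : Fin m → A, InLanguage X w → ¬ ExtendsUniquely X w k) →
          C * n ≤ (k : ℝ) :=
  exists_word_extending_uniquely_general d N hd X hX_ne hX_inv hP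
end

section
/- Let (X,σ) be a subshift, let Y ⊆ X be the closure of the set of aperiodic points of X, and let φ₁,…,φ_m ∈ Aut(X) be automorphisms whose restrictions to Y are the identity. Then the set S := {x ∈ X : ψ(x) ≠ x for at least one ψ in the subgroup ⟨φ₁,…,φ_m⟩} is finite, and consequently the subgroup ⟨φ₁,…,φ_m⟩ of Aut(X) is finite. In particular, the kernel of the restriction homomorphism Aut(X) → Aut(Y) is locally finite (every finitely generated subgroup is finite), hence amenable. -/
open Filter Topology Pointwise

/-- The kernel of the restriction homomorphism `Aut(X) → Aut(Y)`: automorphisms of `X`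
whose restriction to `Y` is the identity. -/
def restKernel {A : Type*} [TopologicalSpace A] (X Y : Set (ℤ → A)) :
    Subgroup (Equiv.Perm ↥X) where
  carrier := {φ | φ ∈ Aut X ∧ ∀ x : ↥X, (x : ℤ → A) ∈ Y → φ x = x}
  one_mem' := ⟨(Aut X).one_mem, fun _ _ => rfl⟩
  mul_mem' := by
    rintro a b ⟨ha, ha'⟩ ⟨hb, hb'⟩
    refine ⟨(Aut X).mul_mem ha hb, fun x hx => ?_⟩
    simp [Equiv.Perm.mul_apply, hb' x hx, ha' x hx]
  inv_mem' := by
    rintro a ⟨ha, ha'⟩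
    refine ⟨(Aut X).inv_mem ha, fun x hx => ?_⟩
    have h1 : a x = x := ha' x hx
    rw [Equiv.Perm.inv_def, Equiv.symm_apply_eq]
    exact h1.symm


/-!
An automorphism `φ` in the kernel is a sliding block code of some radius `R` which fixes every
aperiodic point, so a point moved by `φ` is periodic and contains an `R`-window that occurs in no
aperiodic point. For such a word `w`, the points of `X` carrying `w` at the origin form a compact
set of periodic points. Were it infinite, it would have a (periodic) accumulation point `z`;
recentring the approximants at their first disagreement with `z` produces in the limit a point
that agrees with a shift of `z` on a left half-line but not at `0`: an aperiodic point containing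
`w`, which is absurd. Hence each element of the kernel moves finitely many points, all periodic.
A finitely generated subgroup then acts faithfully on a finite set, and the kernel, which is
countable, is exhausted by an increasing sequence of finite subgroups, a Følner sequence.
-/

open Function Set

section Shift

variable {A : Type*}

def shiftBy (k : ℤ) (x : ℤ → A) : ℤ → A := fun i => x (i + k)

@[simp]
lemma shiftBy_apply (k : ℤ) (x : ℤ → A) (i : ℤ) : shiftBy k x i = x (i + k) := rfl

lemma shiftBy_shiftBy (a b : ℤ) (x : ℤ → A) : shiftBy a (shiftBy b x) = shiftBy (a + b) x := by
  funext i
  simp only [shiftBy_apply, add_assoc]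

@[simp]
lemma shiftBy_zero (x : ℤ → A) : shiftBy 0 x = x := by
  funext i
  simp

lemma shift_eq_shiftBy_one : (shift : (ℤ → A) → ℤ → A) = shiftBy 1 := rfl

lemma shiftBy_injective (k : ℤ) : Injective (shiftBy k : (ℤ → A) → ℤ → A) :=
  LeftInverse.injective (g := shiftBy (-k)) fun x => by simp [shiftBy_shiftBy]

lemma occursAt_shiftBy {n : ℕ} (x : ℤ → A) (w : Fin n → A) (j k : ℤ) :
    OccursAt (shiftBy k x) w j ↔ OccursAt x w (j + k) := by
  simp only [OccursAt, shiftBy_apply, add_right_comm j]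

lemma shiftBy_mem {X : Set (ℤ → A)} (hX : shift '' X = X) {x : ℤ → A} (hx : x ∈ X) (k : ℤ) :
    shiftBy k x ∈ X := by
  have hsucc : ∀ y ∈ X, shiftBy 1 y ∈ X := fun y hy => hX ▸ mem_image_of_mem shift hy
  have hpred : ∀ y ∈ X, shiftBy (-1) y ∈ X := by
    intro y hy
    obtain ⟨y', hy', rfl⟩ := hX.symm ▸ hy
    simpa [shift_eq_shiftBy_one, shiftBy_shiftBy] using hy'
  induction k using Int.induction_on with
  | zero => simpa using hx
  | succ k ih => simpa [shiftBy_shiftBy, add_comm] using hsucc _ ih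
  | pred k ih => simpa [shiftBy_shiftBy, sub_eq_neg_add] using hpred _ ih

lemma not_isAperiodic_iff {x : ℤ → A} : ¬ IsAperiodic x ↔ ∃ p, 0 < p ∧ Periodic x p := by
  simp [IsAperiodic, Periodic, funext_iff]

lemma Function.Periodic.apply_emod {x : ℤ → A} {p : ℤ} (h : Periodic x p) (i : ℤ) :
    x (i % p) = x i := by
  have := (h.zsmul (i / p)) (i % p)
  rwa [smul_eq_mul, mul_comm, Int.emod_add_mul_ediv, eq_comm] at this

lemma Function.Periodic.finite_range_shiftBy {x : ℤ → A} {p : ℤ} (h : Periodic x p)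
    (hp : 0 < p) : (range fun k => shiftBy k x).Finite := by
  refine ((finite_Ico 0 p).image fun k => shiftBy k x).subset ?_
  rintro _ ⟨k, rfl⟩
  refine ⟨k % p, ⟨Int.emod_nonneg _ hp.ne', Int.emod_lt_of_pos _ hp⟩, funext fun i => ?_⟩
  simp only [shiftBy_apply]
  rw [← h.apply_emod, Int.add_emod_emod, h.apply_emod]

lemma Function.Periodic.eq_of_forall_nat {x y : ℤ → A} {p q : ℤ} (hx : Periodic x p)
    (hy : Periodic y q) (hp : 0 < p) (hq : 0 < q) (h : ∀ n : ℕ, x n = y n) : x = y := by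
  funext i
  have hpq : 0 < p * q := mul_pos hp hq
  have hnonneg : 0 ≤ i + |i| * (p * q) := by nlinarith [neg_abs_le i, abs_nonneg i]
  calc x i = x (i + (|i| * q) • p) := ((hx.zsmul _) i).symm
    _ = y (i + (|i| * p) • q) := by
      have := h (i + |i| * (p * q)).toNat
      rw [Int.toNat_of_nonneg hnonneg] at this
      convert this using 2 <;> simp only [smul_eq_mul] <;> ring
    _ = y i := (hy.zsmul _) i

lemma countable_setOf_periodic [Countable A] :
    {x : ℤ → A | ∃ p, 0 < p ∧ Periodic x p}.Countable := by
  have hsub : {x : ℤ → A | ∃ p, 0 < p ∧ Periodic x p} ⊆ ⋃ n : ℕ, {x | Periodic x (n + 1)} := by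
    rintro x ⟨p, hp, hx⟩
    refine mem_iUnion.2 ⟨(p - 1).toNat, ?_⟩
    rwa [Int.toNat_of_nonneg (by omega : 0 ≤ p - 1), sub_add_cancel]
  refine Countable.mono hsub (countable_iUnion fun n => ?_)
  refine MapsTo.countable_of_injOn (f := fun x (t : Fin (n + 1)) => x t) (mapsTo_univ _ _)
    (fun x hx y hy hxy => funext fun i => ?_) countable_univ
  have hn : (0 : ℤ) < n + 1 := by omega
  have ht : (i % (n + 1)).toNat < n + 1 := by
    have := Int.emod_lt_of_pos i hn
    omega
  rw [← hx.apply_emod, ← hy.apply_emod, ← Int.toNat_of_nonneg (Int.emod_nonneg i hn.ne')]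
  exact congrFun hxy ⟨_, ht⟩

end Shift

section Topology

variable {A : Type*} [TopologicalSpace A] [DiscreteTopology A]

lemma Filter.Tendsto.eventually_apply_eq {ι : Type*} {l : Filter ι} {c : ι → ℤ → A}
    {z : ℤ → A} (h : Tendsto c l (𝓝 z)) (i : ℤ) : ∀ᶠ a in l, c a i = z i := by
  have := ((continuous_apply i).tendsto z).comp h
  rwa [nhds_discrete, tendsto_pure] at this

lemma isClosed_setOf_occursAt {n : ℕ} (w : Fin n → A) (j : ℤ) :
    IsClosed {x : ℤ → A | OccursAt x w j} := by
  simp only [OccursAt, ofPred_forall]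
  exact isClosed_iInter fun t => isClosed_eq (continuous_apply _) continuous_const

/-- The pairs agreeing on `[-R, R]` but separated by `g` form a decreasing family of closed sets
with empty intersection, so one of them is already empty. -/
lemma IsCompact.exists_radius {X : Set (ℤ → A)} (hX : IsCompact X) {B : Type*}
    [TopologicalSpace B] [DiscreteTopology B] {g : X → B} (hg : Continuous g) :
    ∃ R : ℕ, ∀ x y : X, (∀ i : ℤ, |i| ≤ R → (x : ℤ → A) i = (y : ℤ → A) i) → g x = g y := by
  have : CompactSpace X := isCompact_iff_compactSpace.1 hX
  let E : ℕ → Set (X × X) := fun R =>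
    {p | (∀ i : ℤ, |i| ≤ R → (p.1 : ℤ → A) i = (p.2 : ℤ → A) i) ∧ g p.1 ≠ g p.2}
  have hE_closed : ∀ R, IsClosed (E R) := by
    intro R
    have hwindow : IsClosed
        {p : X × X | ∀ i : ℤ, |i| ≤ R → (p.1 : ℤ → A) i = (p.2 : ℤ → A) i} := by
      simp only [ofPred_forall]
      exact isClosed_iInter fun i => isClosed_iInter fun _ =>
        isClosed_eq ((continuous_apply i).comp (continuous_subtype_val.comp continuous_fst))
          ((continuous_apply i).comp (continuous_subtype_val.comp continuous_snd))
    exact hwindow.inter ((isClosed_discrete {q : B × B | q.1 ≠ q.2}).preimage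
      (f := fun p : X × X => (g p.1, g p.2)) (by fun_prop))
  have hE_anti : Antitone E := fun R R' hRR' p hp =>
    ⟨fun i hi => hp.1 i (hi.trans (by exact_mod_cast hRR')), hp.2⟩
  have hE_empty : univ ∩ ⋂ R, E R = ∅ := by
    refine eq_empty_of_forall_notMem fun p ⟨_, hp⟩ => ?_
    have hp := mem_iInter.1 hp
    refine (hp 0).2 (congrArg g (Subtype.ext (funext fun i => ?_)))
    exact (hp i.natAbs).1 i (Int.abs_eq_natAbs i).le
  obtain ⟨R, hR⟩ := isCompact_univ.elim_directed_family_closed E hE_closed hE_empty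
    hE_anti.directed_ge
  exact ⟨R, fun x y hxy => by_contra fun hne => (eq_empty_iff_forall_notMem.1 hR) (x, y)
    ⟨mem_univ _, hxy, hne⟩⟩

end Topology

section Automorphism

variable {A : Type*} [TopologicalSpace A] {X : Set (ℤ → A)} {φ : Equiv.Perm X}

lemma coe_apply_shiftBy_of_mem_Aut (hX : shift '' X = X) (hφ : φ ∈ Aut X) (x : X) (k : ℤ) :
    (φ ⟨shiftBy k x, shiftBy_mem hX x.2 k⟩ : ℤ → A) = shiftBy k (φ x) := by
  have hstep : ∀ u : X, (φ ⟨shiftBy 1 u, shiftBy_mem hX u.2 1⟩ : ℤ → A) = shiftBy 1 (φ u) :=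
    fun u => (hφ.2.2.1 u _ rfl).symm
  induction k using Int.induction_on with
  | zero => simp
  | succ k ih =>
    have := hstep ⟨shiftBy k x, shiftBy_mem hX x.2 k⟩
    simp only [shiftBy_shiftBy, ih, add_comm (1 : ℤ)] at this
    exact this
  | pred k ih =>
    have := hstep ⟨shiftBy (-k - 1) x, shiftBy_mem hX x.2 _⟩
    simp only [shiftBy_shiftBy, show (1 : ℤ) + (-k - 1) = -k by ring, ih] at this
    apply shiftBy_injective 1
    rw [← this, shiftBy_shiftBy]
    ring_nf

lemma apply_eq_of_mem_Aut (hX : shift '' X = X) (hφ : φ ∈ Aut X) {R : ℕ}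
    (hR : ∀ x y : X, (∀ i : ℤ, |i| ≤ R → (x : ℤ → A) i = (y : ℤ → A) i) →
      (φ x : ℤ → A) 0 = (φ y : ℤ → A) 0)
    {x y : X} {j j' : ℤ} (h : ∀ i : ℤ, |i| ≤ R → (x : ℤ → A) (j + i) = (y : ℤ → A) (j' + i)) :
    (φ x : ℤ → A) j = (φ y : ℤ → A) j' := by
  have hx := congrFun (coe_apply_shiftBy_of_mem_Aut hX hφ x j) 0
  have hy := congrFun (coe_apply_shiftBy_of_mem_Aut hX hφ y j') 0
  simp only [shiftBy_apply, zero_add] at hx hy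
  rw [← hx, ← hy]
  exact hR _ _ fun i hi => by simpa [add_comm] using h i hi

lemma apply_eq_self_of_forall_window_occursAt (hX : shift '' X = X) (hφ : φ ∈ Aut X) {R : ℕ}
    (hR : ∀ x y : X, (∀ i : ℤ, |i| ≤ R → (x : ℤ → A) i = (y : ℤ → A) i) →
      (φ x : ℤ → A) 0 = (φ y : ℤ → A) 0)
    (x : X) (h : ∀ j : ℤ, ∃ y : X, φ y = y ∧
      ∃ j', OccursAt (y : ℤ → A) (fun t : Fin (2 * R + 1) => (x : ℤ → A) (j - R + t)) j') :
    φ x = x := by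
  refine Subtype.ext (funext fun j => ?_)
  obtain ⟨y, hy, j', hocc⟩ := h j
  have hwindow : ∀ i : ℤ, |i| ≤ R → (x : ℤ → A) (j + i) = (y : ℤ → A) (j' + R + i) := by
    intro i hi
    obtain ⟨hi₁, hi₂⟩ := abs_le.1 hi
    have hiR : 0 ≤ i + R := by omega
    have := hocc ⟨(i + R).toNat, by omega⟩
    simp only [Int.toNat_of_nonneg hiR] at this
    convert this.symm using 2 <;> ring
  calc (φ x : ℤ → A) j = (φ y : ℤ → A) (j' + R) := apply_eq_of_mem_Aut hX hφ hR hwindow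
    _ = (x : ℤ → A) j := by simpa [hy] using (hwindow 0 (by simp)).symm

end Automorphism

section Finiteness

variable {A : Type*}

/-- `0` when `c` and `z` agree on `ℕ`. -/
noncomputable def firstDiff (c z : ℤ → A) : ℕ := sInf {m : ℕ | c m ≠ z m}

lemma apply_firstDiff_ne {c z : ℤ → A} (h : ∃ m : ℕ, c m ≠ z m) :
    c (firstDiff c z) ≠ z (firstDiff c z) :=
  Nat.sInf_mem h

lemma apply_eq_of_lt_firstDiff {c z : ℤ → A} {m : ℕ} (hm : m < firstDiff c z) : c m = z m :=
  not_not.1 (Nat.notMem_of_lt_sInf hm)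

variable [TopologicalSpace A] [DiscreteTopology A] [Finite A] {X : Set (ℤ → A)}

/-- The ultrafilter fixes the phase `b mod q`; the limit of the points recentred at `b` then
agrees with a shift of `z` on the negative half-line but not at `0`, so it is not periodic. -/
theorem exists_isAperiodic_of_firstDiff_tendsto (hX_cl : IsClosed X) (hX : shift '' X = X)
    {z : ℤ → A} {q : ℤ} (hq : 0 < q) (hz : Periodic z q) {ι : Type*} (U : Ultrafilter ι)
    (c : ι → ℤ → A) (b : ι → ℕ) (hcX : ∀ᶠ a in U, c a ∈ X) (hb : ∀ N : ℕ, ∀ᶠ a in U, N ≤ b a)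
    (hagree : ∀ᶠ a in U, ∀ m : ℕ, m < b a → c a m = z m)
    (hdiff : ∀ᶠ a in U, c a (b a) ≠ z (b a)) :
    ∃ y ∈ X, IsAperiodic y ∧ ∃ r, ∀ i < 0, y i = z (i + r) := by
  obtain ⟨r, -, hr⟩ : ∃ r ∈ Ico 0 q, {a | (b a : ℤ) % q = r} ∈ U := by
    refine (Ultrafilter.finite_biUnion_mem_iff (finite_Ico 0 q)).1 (univ_mem' fun a => ?_)
    exact mem_biUnion ⟨Int.emod_nonneg _ hq.ne', Int.emod_lt_of_pos _ hq⟩ rfl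
  have hphase : ∀ᶠ a in U, ∀ i, z (i + b a) = z (i + r) := Filter.mem_of_superset hr
    fun a ha i => by rw [← hz.apply_emod, ← Int.add_emod_emod, ha, hz.apply_emod]
  obtain ⟨y, hyX, hy⟩ := hX_cl.isCompact.ultrafilter_le_nhds (U.map fun a => shiftBy (b a) (c a))
    (le_principal_iff.2 (hcX.mono fun a ha => shiftBy_mem hX ha _))
  have hy : Tendsto (fun a => shiftBy (b a) (c a)) U (𝓝 y) := hy
  have hleft : ∀ i < 0, y i = z (i + r) := by
    intro i hi
    obtain ⟨a, hya, hba, hca, hza⟩ :=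
      ((hy.eventually_apply_eq i).and ((hb (-i).toNat).and (hagree.and hphase))).exists
    rw [← hya, shiftBy_apply, ← hza, ← Int.toNat_of_nonneg (by omega : 0 ≤ i + b a)]
    exact hca _ (by omega)
  have hzero : y 0 ≠ z r := by
    obtain ⟨a, hya, hca, hza⟩ := ((hy.eventually_apply_eq 0).and (hdiff.and hphase)).exists
    have h0 := hza 0
    simp only [zero_add] at h0
    rwa [← hya, shiftBy_apply, zero_add, ← h0]
  refine ⟨y, hyX, fun p hp hyp => hzero ?_, r, hleft⟩
  calc y 0 = y (0 + (-q) • p) := ((show Periodic y p from congrFun hyp).zsmul (-q) 0).symm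
    _ = z (0 + (-q) • p + r) := hleft _ (by simp only [smul_eq_mul]; nlinarith)
    _ = z r := by simpa [smul_eq_mul, mul_comm, add_comm] using (hz.zsmul (-p)) r

/-- Two distinct periodic points already differ somewhere on `ℕ`; recentre the approximants of
`z` at their first such difference. -/
theorem exists_isAperiodic_of_accPt (hX_cl : IsClosed X) (hX : shift '' X = X)
    {P : Set (ℤ → A)} (hPX : P ⊆ X) (hP : ∀ c ∈ P, ∃ p, 0 < p ∧ Periodic c p) {z : ℤ → A} {q : ℤ}
    (hq : 0 < q) (hz : Periodic z q) (hacc : AccPt z (𝓟 P)) :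
    ∃ y ∈ X, IsAperiodic y ∧ ∃ r, ∀ i < 0, y i = z (i + r) := by
  have : (𝓝[≠] z ⊓ 𝓟 P).NeBot := hacc
  let U := Ultrafilter.of (𝓝[≠] z ⊓ 𝓟 P)
  have hU : (U : Filter (ℤ → A)) ≤ 𝓝[≠] z ⊓ 𝓟 P := Ultrafilter.of_le _
  have hUP : ∀ᶠ c : ℤ → A in U, c ∈ P := hU (mem_inf_of_right (mem_principal_self P))
  have hUz : ∀ᶠ c : ℤ → A in U, c ≠ z := hU (mem_inf_of_left self_mem_nhdsWithin)
  have hUt : Tendsto id U (𝓝 z) := hU.trans (inf_le_left.trans nhdsWithin_le_nhds)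
  have hne : ∀ᶠ c : ℤ → A in U, ∃ m : ℕ, c m ≠ z m := by
    filter_upwards [hUP, hUz] with c hc hcz
    obtain ⟨p, hp, hcp⟩ := hP c hc
    by_contra! h
    exact hcz (hcp.eq_of_forall_nat hz hp hq h)
  refine exists_isAperiodic_of_firstDiff_tendsto hX_cl hX hq hz U id (firstDiff · z)
    (hUP.mono fun c hc => hPX hc) (fun N => ?_)
    (Eventually.of_forall fun (c : ℤ → A) (m : ℕ) hm => apply_eq_of_lt_firstDiff hm)
    (hne.mono fun c hc => apply_firstDiff_ne hc)
  have hstart : ∀ᶠ c : ℤ → A in U, ∀ m ∈ Finset.range N, c m = z m :=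
    (eventually_all_finset _).2 fun m _ => hUt.eventually_apply_eq m
  filter_upwards [hstart, hne] with c hc hcne
  by_contra! hlt
  exact apply_firstDiff_ne hcne (hc _ (Finset.mem_range.2 hlt))

theorem finite_setOf_occursAt_zero (hX_cl : IsClosed X) (hX : shift '' X = X) {n : ℕ}
    {w : Fin n → A} (hw : ∀ y ∈ X, IsAperiodic y → ∀ j, ¬ OccursAt y w j) :
    {x ∈ X | OccursAt x w 0}.Finite := by
  set C := {x ∈ X | OccursAt x w 0}
  have hC_per : ∀ c ∈ C, ∃ p, 0 < p ∧ Periodic c p := fun c hc =>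
    not_isAperiodic_iff.1 fun hap => hw c hc.1 hap 0 hc.2
  by_contra hinf
  obtain ⟨z, hzC, hacc⟩ := Set.Infinite.exists_accPt_of_subset_isCompact hinf
    (hX_cl.inter (isClosed_setOf_occursAt w 0)).isCompact subset_rfl
  obtain ⟨q, hq, hz⟩ := hC_per z hzC
  obtain ⟨y, hyX, hy_ap, r, hyz⟩ :=
    exists_isAperiodic_of_accPt hX_cl hX (fun c hc => hc.1) hC_per hq hz hacc
  -- `w` occurs in `z` at every multiple of `q`, hence in `y` at some negative position
  refine hw y hyX hy_ap (-(|r| + n) * q - r) fun t => ?_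
  have ht : (t : ℤ) < n := by exact_mod_cast t.isLt
  rw [hyz _ (by nlinarith [neg_abs_le r, abs_nonneg r])]
  have hwz : z t = w t := by simpa using hzC.2 t
  convert ((hz.zsmul (-(|r| + n))) t).trans hwz using 2
  simp only [smul_eq_mul]
  ring

theorem finite_setOf_exists_occursAt (hX_cl : IsClosed X) (hX : shift '' X = X) {n : ℕ}
    {w : Fin n → A} (hw : ∀ y ∈ X, IsAperiodic y → ∀ j, ¬ OccursAt y w j) :
    {x ∈ X | ∃ j, OccursAt x w j}.Finite := by
  refine ((finite_setOf_occursAt_zero hX_cl hX hw).biUnion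
    (t := fun c => range fun k => shiftBy k c) fun c hc => ?_).subset ?_
  · obtain ⟨p, hp, hcp⟩ := not_isAperiodic_iff.1 fun hap => hw c hc.1 hap 0 hc.2
    exact hcp.finite_range_shiftBy hp
  · rintro x ⟨hx, j, hj⟩
    exact mem_biUnion ⟨shiftBy_mem hX hx j, (occursAt_shiftBy x w 0 j).2 (by simpa using hj)⟩
      ⟨-j, by simp [shiftBy_shiftBy]⟩

theorem finite_setOf_apply_ne_of_mem_Aut (hX_cl : IsClosed X) (hX : shift '' X = X)
    {φ : Equiv.Perm X} (hφ : φ ∈ Aut X) (hfix : ∀ x : X, IsAperiodic (x : ℤ → A) → φ x = x) :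
    {x : X | φ x ≠ x}.Finite := by
  obtain ⟨R, hR⟩ := hX_cl.isCompact.exists_radius (g := fun x : X => (φ x : ℤ → A) 0)
    ((continuous_apply 0).comp (continuous_subtype_val.comp hφ.1))
  let B := {w : Fin (2 * R + 1) → A | ∀ y ∈ X, IsAperiodic y → ∀ j, ¬ OccursAt y w j}
  refine ((toFinite B).biUnion fun w hw => (finite_setOf_exists_occursAt hX_cl hX hw).preimage
    Subtype.val_injective.injOn).subset fun x hx => ?_
  obtain ⟨j, hj⟩ : ∃ j : ℤ, ∀ y ∈ X, IsAperiodic y →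
      ∀ j', ¬ OccursAt y (fun t : Fin (2 * R + 1) => (x : ℤ → A) (j - R + t)) j' := by
    by_contra! h
    refine hx (apply_eq_self_of_forall_window_occursAt hX hφ hR x fun j => ?_)
    obtain ⟨y, hyX, hy_ap, j', hocc⟩ := h j
    exact ⟨⟨y, hyX⟩, hfix _ hy_ap, j', hocc⟩
  exact mem_biUnion (x := fun t : Fin (2 * R + 1) => (x : ℤ → A) (j - R + t)) (s := B) hj
    ⟨x.2, j - R, fun t => rfl⟩

end Finiteness

section Perm

open Equiv

variable {α : Type*}

def movedPoints (s : Set (Perm α)) : Set α := {x | ∃ ψ ∈ s, ψ x ≠ x}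

lemma movedPoints_eq_biUnion (s : Set (Perm α)) : movedPoints s = ⋃ ψ ∈ s, {x | ψ x ≠ x} := by
  ext x
  simp [movedPoints]

lemma movedPoints_closure (s : Set (Perm α)) :
    movedPoints (Subgroup.closure s : Set (Perm α)) = movedPoints s := by
  refine Subset.antisymm (fun x ⟨ψ, hψ, hx⟩ => ?_)
    fun x ⟨ψ, hψ, hx⟩ => ⟨ψ, Subgroup.subset_closure hψ, hx⟩
  by_contra h
  have hfix : Subgroup.closure s ≤ MulAction.stabilizer (Perm α) x :=
    (Subgroup.closure_le _).2 fun g hg => not_not.1 fun hgx => h ⟨g, hg, hgx⟩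
  exact hx (hfix hψ)

lemma apply_mem_movedPoints {H : Subgroup (Perm α)} {ψ : Perm α} (hψ : ψ ∈ H) {x : α}
    (hx : x ∈ movedPoints (H : Set (Perm α))) : ψ x ∈ movedPoints (H : Set (Perm α)) := by
  by_contra h
  have hfix : ψ⁻¹ (ψ x) = ψ x := not_not.1 fun hne => h ⟨ψ⁻¹, H.inv_mem hψ, hne⟩
  simp only [Perm.coe_inv, Equiv.symm_apply_apply] at hfix
  exact h (hfix ▸ hx)

/-- A group of permutations moving only finitely many points embeds into the symmetric group
of those points. -/
theorem Subgroup.finite_of_finite_movedPoints (H : Subgroup (Perm α))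
    (hH : (movedPoints (H : Set (Perm α))).Finite) : (H : Set (Perm α)).Finite := by
  classical
  have := hH.to_subtype
  refine (finite_range (Perm.ofSubtype : Perm (movedPoints (H : Set (Perm α))) → Perm α)).subset
    fun ψ hψ => ⟨ψ.subtypePerm fun x => ?_, Perm.ofSubtype_subtypePerm _ fun x hx => ⟨ψ, hψ, hx⟩⟩
  refine ⟨fun hψx => ?_, apply_mem_movedPoints hψ⟩
  simpa using apply_mem_movedPoints (H.inv_mem hψ) hψx

/-- A permutation is determined by its graph on the points it moves. -/
theorem countable_of_movedPoints_subset {P : Set α} (hP : P.Countable) {s : Set (Perm α)}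
    (hs : ∀ ψ ∈ s, {x | ψ x ≠ x}.Finite ∧ {x | ψ x ≠ x} ⊆ P) : s.Countable := by
  let graph : Perm α → Set (α × α) := fun ψ => (fun x => (x, ψ x)) '' {x | ψ x ≠ x}
  have hgraph : ∀ ψ ψ' x, graph ψ = graph ψ' → ψ x ≠ x → ψ' x = ψ x := by
    intro ψ ψ' x h hx
    have hmem : (x, ψ x) ∈ graph ψ' := h ▸ ⟨x, hx, rfl⟩
    obtain ⟨x', -, hx'⟩ := hmem
    simp only [Prod.mk.injEq] at hx'
    exact hx'.1 ▸ hx'.2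
  refine MapsTo.countable_of_injOn (f := graph) (t := {t | t.Finite ∧ t ⊆ P ×ˢ P})
    (fun ψ hψ => ⟨(hs ψ hψ).1.image _, ?_⟩) (fun ψ _ ψ' _ h => Equiv.ext fun x => ?_)
    (countable_ofPred_finite_subset (hP.prod hP))
  · rintro _ ⟨x, hx, rfl⟩
    exact ⟨(hs ψ hψ).2 hx, (hs ψ hψ).2 fun h => hx (ψ.injective h)⟩
  · by_cases hx : ψ x = x
    · by_cases hx' : ψ' x = x
      · rw [hx, hx']
      · exact hgraph ψ' ψ x h.symm hx'
    · exact (hgraph ψ ψ' x h hx).symm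

end Perm

/-- An exhaustion by finite subgroups is a Følner sequence. -/
theorem folnerAmenable_of_finite_closure {G : Type*} [Group G] [Countable G]
    (h : ∀ s : Set G, s.Finite → (Subgroup.closure s : Set G).Finite) : FolnerAmenable G := by
  obtain ⟨e, he⟩ := exists_surjective_nat G
  have hmem : ∀ n k, n ≤ k → e n ∈ Subgroup.closure (e '' Iic k) := fun n k hnk =>
    Subgroup.subset_closure ⟨n, hnk, rfl⟩
  refine ⟨fun k => Subgroup.closure (e '' Iic k), fun k => h _ ((finite_Iic k).image e),
    fun g => ?_, fun g => ?_⟩ <;> obtain ⟨n, rfl⟩ := he g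
  · exact eventually_atTop.2 ⟨n, hmem n⟩
  · refine tendsto_const_nhds.congr' (eventually_atTop.2 ⟨n, fun k hk => ?_⟩)
    simp only [smul_coe_set (hmem n k hk), symmDiff_self, bot_eq_empty, ncard_empty]
    simp

section RestKernel

variable {A : Type*} [TopologicalSpace A] [DiscreteTopology A] [Finite A] {X Y : Set (ℤ → A)}

theorem finite_setOf_apply_ne_of_mem_restKernel (hX_cl : IsClosed X) (hX : shift '' X = X)
    (hY : ∀ x ∈ X, IsAperiodic x → x ∈ Y) {φ : Equiv.Perm X} (hφ : φ ∈ restKernel X Y) :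
    {x : X | φ x ≠ x}.Finite :=
  finite_setOf_apply_ne_of_mem_Aut hX_cl hX hφ.1 fun x hx => hφ.2 x (hY x x.2 hx)

theorem finite_movedPoints_closure_of_subset_restKernel (hX_cl : IsClosed X)
    (hX : shift '' X = X) (hY : ∀ x ∈ X, IsAperiodic x → x ∈ Y) {s : Set (Equiv.Perm X)}
    (hs : s.Finite) (hsK : s ⊆ restKernel X Y) :
    (movedPoints (Subgroup.closure s : Set (Equiv.Perm X))).Finite := by
  rw [movedPoints_closure, movedPoints_eq_biUnion]
  exact hs.biUnion fun ψ hψ => finite_setOf_apply_ne_of_mem_restKernel hX_cl hX hY (hsK hψ)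

theorem countable_restKernel (hX_cl : IsClosed X) (hX : shift '' X = X)
    (hY : ∀ x ∈ X, IsAperiodic x → x ∈ Y) : Countable (restKernel X Y) := by
  refine Set.Countable.to_subtype (countable_of_movedPoints_subset
    (countable_setOf_periodic.preimage Subtype.val_injective) fun ψ hψ =>
      ⟨finite_setOf_apply_ne_of_mem_restKernel hX_cl hX hY hψ,
        fun x hx => not_isAperiodic_iff.1 fun hap => hx (hψ.2 x (hY x x.2 hap))⟩)

theorem folnerAmenable_restKernel (hX_cl : IsClosed X) (hX : shift '' X = X)
    (hY : ∀ x ∈ X, IsAperiodic x → x ∈ Y) : FolnerAmenable (restKernel X Y) := by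
  have := countable_restKernel hX_cl hX hY
  refine folnerAmenable_of_finite_closure fun T hT => ?_
  refine Finite.of_finite_image ?_ (restKernel X Y).subtype_injective.injOn
  rw [← Subgroup.coe_map, MonoidHom.map_closure]
  exact Subgroup.finite_of_finite_movedPoints _
    (finite_movedPoints_closure_of_subset_restKernel hX_cl hX hY (hT.image _)
      (image_subset_iff.2 fun ψ _ => ψ.2))

end RestKernel

/-- Let `Y` be the closure of the aperiodic points of `X`, and let `φ₁, …, φ_m ∈ Aut(X)`
restrict to the identity on `Y`.  Then `S = {x ∈ X : ψ(x) ≠ x for some ψ ∈ ⟨φ₁, …, φ_m⟩}`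
is finite and `⟨φ₁, …, φ_m⟩` is finite.  In particular, the kernel of the restriction
homomorphism `Aut(X) → Aut(Y)` is locally finite, hence amenable. -/
theorem restKernel_locallyFinite_amenable {A : Type*} [Fintype A] [TopologicalSpace A]
    [DiscreteTopology A] (X : Set (ℤ → A)) (hX_cl : IsClosed X) (hX_inv : shift '' X = X)
    (Y : Set (ℤ → A)) (hY : Y = closure {x | x ∈ X ∧ IsAperiodic x})
    (m : ℕ) (φ : Fin m → Equiv.Perm ↥X) (hφ : ∀ i, φ i ∈ restKernel X Y) :
    {x : ↥X | ∃ ψ ∈ Subgroup.closure (Set.range φ), ψ x ≠ x}.Finite ∧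
    ((Subgroup.closure (Set.range φ) : Subgroup (Equiv.Perm ↥X)) :
      Set (Equiv.Perm ↥X)).Finite ∧
    (∀ s : Finset (Equiv.Perm ↥X), (↑s : Set (Equiv.Perm ↥X)) ⊆ (restKernel X Y : Set _) →
      ((Subgroup.closure (↑s : Set (Equiv.Perm ↥X)) : Subgroup (Equiv.Perm ↥X)) :
        Set (Equiv.Perm ↥X)).Finite) ∧
    FolnerAmenable ↥(restKernel X Y) := by
  have hY_ap : ∀ x ∈ X, IsAperiodic x → x ∈ Y := fun x hx hap => hY ▸ subset_closure ⟨hx, hap⟩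
  have hmoved := fun s hs hsK =>
    finite_movedPoints_closure_of_subset_restKernel hX_cl hX_inv hY_ap (s := s) hs hsK
  have hrange : range φ ⊆ restKernel X Y := range_subset_iff.2 hφ
  exact ⟨hmoved _ (finite_range φ) hrange,
    Subgroup.finite_of_finite_movedPoints _ (hmoved _ (finite_range φ) hrange),
    fun s hs => Subgroup.finite_of_finite_movedPoints _ (hmoved _ s.finite_toSet hs),
    folnerAmenable_restKernel hX_cl hX_inv hY_ap⟩
end
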